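/- arXiv:1408.5177 — 2 statements merged into one kernel-verified Lean document; each statement's English description precedes it below -/
import Mathlib

section
/- Let X be a topological space and let r be an equivalence relation on X such that for every a ∈ X there exists a set V contained in the equivalence class [a] := {x ∈ X : r x a} with V open in the subspace topology of closure [a] and V dense in closure [a]. Then for all a, b ∈ X one has r a b if and only if closure [a] = closure [b]. -/
/-!
If `[a]` and `[b]` have the same closure `C`, the hypothesis gives an open `U` with `U ∩ C`
nonempty and contained in `[a]`.
Since `[b]` is dense in `C`, it meets `U`, and any such point lies in `U ∩ C ⊆ [a]`;
so the two classes intersect and `r a b`.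
-/

open Set

theorem inter_nonempty_of_closure_eq {X : Type*} [TopologicalSpace X] {S T U : Set X}
    (hU : IsOpen U) (hUS : U ∩ closure S ⊆ S) (hne : (U ∩ closure S).Nonempty)
    (hST : closure S = closure T) : (S ∩ T).Nonempty := by
  rw [hST] at hUS hne
  obtain ⟨y, hyU, hyT⟩ := closure_nonempty_iff.mp (hne.mono (hU.inter_closure (t := T)))
  exact ⟨y, hUS ⟨hyU, subset_closure hyT⟩, hyT⟩

/-- If every equivalence class of an equivalence relation `r` on a topological
space contains a subset that is open and dense in the closure of the class, then two points
are related iff their classes have the same closure. -/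
theorem equiv_iff_closure_class_eq {X : Type*} [TopologicalSpace X] (r : X → X → Prop)
    (hr : Equivalence r)
    (h : ∀ a : X, ∃ V : Set X, V ⊆ {x | r x a} ∧
      (∃ U : Set X, IsOpen U ∧ V = U ∩ closure {x | r x a}) ∧
      closure {x | r x a} ⊆ closure V) :
    ∀ a b : X, r a b ↔ closure {x | r x a} = closure {x | r x b} := by
  intro a b
  refine ⟨fun hab => ?_, fun hcl => ?_⟩
  · have hclass : {x | r x a} = {x | r x b} :=
      ext fun x => ⟨fun hx => hr.trans hx hab, fun hx => hr.trans hx (hr.symm hab)⟩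
    rw [hclass]
  · obtain ⟨_, hVa, ⟨U, hU, rfl⟩, hdense⟩ := h a
    have hne : (U ∩ closure {x | r x a}).Nonempty :=
      closure_nonempty_iff.mp ⟨a, hdense (subset_closure (hr.refl a))⟩
    obtain ⟨y, hya, hyb⟩ := inter_nonempty_of_closure_eq hU hVa hne hcl
    exact hr.trans (hr.symm hya) hyb
end

section
/- Let S be a set, let (X_m)_{m ∈ ℕ} be topological spaces, let ∇_m : S → X_m be maps, and let π_m : X_{m+1} → X_m be continuous maps satisfying π_m ∘ ∇_{m+1} = ∇_m for all m. Equip S with the coarsest topology making every ∇_m continuous, and assume that S with this topology is a Noetherian topological space. Then for every subset A ⊆ S there exists M ∈ ℕ such that the closure of A equals ∇_M⁻¹(closure (∇_M '' A)), where the closure of ∇_M '' A is taken in X_M. -/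
/-!
The topologies induced by the `∇ m` decrease with `m`, since `∇ m` factors continuously through
`∇ (m + 1)`. Hence the closure of `A` in their infimum is the intersection of the decreasing
chain of closed sets `∇ m ⁻¹' closure (∇ m '' A)`, and Noetherianity makes this chain stop.
-/

open TopologicalSpace Filter Set Topology

theorem antitone_induced_of_comp_eq {S : Type*} {X : ℕ → Type*} [∀ m, TopologicalSpace (X m)]
    {nabla : ∀ m, S → X m} {proj : ∀ m, X (m + 1) → X m} (hproj : ∀ m, Continuous (proj m))
    (hcomm : ∀ m, proj m ∘ nabla (m + 1) = nabla m) :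
    Antitone fun m => induced (nabla m) inferInstance :=
  antitone_nat_of_succ_le fun m => by
    rw [← hcomm m, ← induced_compose]
    exact induced_mono (hproj m).le_induced

theorem closure_iInf_of_directed {ι S : Type*} [Nonempty ι] {t : ι → TopologicalSpace S}
    (ht : Directed (· ≥ ·) t) (A : Set S) :
    closure[⨅ i, t i] A = ⋂ i, closure[t i] A := by
  ext x
  have hdir : Directed (· ≥ ·) fun i => @nhds S (t i) x ⊓ 𝓟 A :=
    fun i j => (ht i j).imp fun _ hk =>
      ⟨inf_le_inf_right _ (nhds_mono hk.1), inf_le_inf_right _ (nhds_mono hk.2)⟩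
  simp only [mem_iInter, mem_closure_iff_clusterPt, ClusterPt, nhds_iInf, iInf_inf,
    iInf_neBot_iff_of_directed' hdir]

theorem TopologicalSpace.NoetherianSpace.exists_iInter_eq_of_antitone {S : Type*}
    [TopologicalSpace S] [NoetherianSpace S] {B : ℕ → Set S} (hB : Antitone B)
    (hclosed : ∀ n, IsClosed (B n)) : ∃ M, ⋂ n, B n = B M := by
  let C : ℕ → Closeds S := fun n => ⟨B n, hclosed n⟩
  obtain ⟨M, hM⟩ := WellFoundedLT.antitone_chain_condition (f := C) fun _ _ h => hB h
  refine ⟨M, (iInter_subset B M).antisymm fun x hx => mem_iInter.2 fun n => ?_⟩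
  rcases le_total M n with h | h
  · exact (congrArg Closeds.carrier (hM n h)).subset hx
  · exact hB h hx

/-- With the hypotheses of Statement 10, if the initial topology on `S` is
Noetherian, then the closure of any set `A` is realized at a single finite level `M`. -/
theorem closure_eq_preimage_closure_of_noetherian {S : Type*} {X : ℕ → Type*}
    [∀ m, TopologicalSpace (X m)]
    (nabla : ∀ m, S → X m) (proj : ∀ m, X (m + 1) → X m)
    (hproj : ∀ m, Continuous (proj m))
    (hcomm : ∀ m, proj m ∘ nabla (m + 1) = nabla m)
    (hNoeth : @TopologicalSpace.NoetherianSpace S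
      (⨅ m, TopologicalSpace.induced (nabla m) inferInstance))
    (A : Set S) :
    ∃ M : ℕ, @closure S (⨅ m, TopologicalSpace.induced (nabla m) inferInstance) A =
      nabla M ⁻¹' closure (nabla M '' A) := by
  set τ : ℕ → TopologicalSpace S := fun m => induced (nabla m) inferInstance
  let _ : TopologicalSpace S := ⨅ m, τ m
  have hτ : Antitone τ := antitone_induced_of_comp_eq hproj hcomm
  obtain ⟨M, hM⟩ := hNoeth.exists_iInter_eq_of_antitone (B := fun m => closure[τ m] A)
    (fun _ _ h => closure.mono (hτ h)) fun m => (@isClosed_closure S (τ m) A).mono (iInf_le τ m)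
  refine ⟨M, ?_⟩
  rw [closure_iInf_of_directed hτ.directed_ge, hM]
  exact Set.ext fun _ => closure_induced
end
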